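/- Let s ≥ 3/2. There is a constant c > 0, depending only on s, such that for all m ∈ ℤ and all M ∈ ℕ: (a) Σ_{n∈ℤ} ⟨n⟩^{−(2s−1)}⟨m−n⟩^{−1} ≤ c·⟨m⟩^{−1}; and (b) Σ_{n∈ℤ, |n|≥M} ⟨n⟩^{−(2s−1)}⟨m−n⟩^{−1} ≤ c·⟨m⟩^{−1}·( 1_{{|m| ≥ 2M/3}} + ⟨M⟩^{−1} ). -/

import Mathlib

/-!
Since `2s - 1 ≥ 2`, the weight `⟨n⟩^{-(2s-1)}` is dominated by the summable `⟨n⟩^{-2}`.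
For (a), `⟨m⟩ ≤ ⟨n⟩ + ⟨m - n⟩` and AM-GM give
`⟨m⟩ ⟨n⟩^{-2} ⟨m - n⟩^{-1} ≤ (3/2) ⟨n⟩^{-2} + (1/2) ⟨m - n⟩^{-2}`, and both terms sum over `n`.
For (b), only the case `|m| < 2M/3` is new: then `|n| ≥ M` forces `⟨m⟩ ≤ 2 ⟨m - n⟩`, which
reduces the sum to the tail `∑_{|n| ≥ M} n^{-2} ≤ 4/M`.
-/

/-- The Japanese bracket `⟨n⟩ = (1+n²)^{1/2}` of an integer. -/
noncomputable def jap (n : ℤ) : ℝ := Real.sqrt (1 + (n : ℝ) ^ 2)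

open Finset

lemma one_le_jap (n : ℤ) : 1 ≤ jap n :=
  Real.one_le_sqrt.mpr (by nlinarith)

lemma jap_pos (n : ℤ) : 0 < jap n :=
  one_pos.trans_le (one_le_jap n)

lemma jap_sq (n : ℤ) : jap n ^ 2 = 1 + (n : ℝ) ^ 2 :=
  Real.sq_sqrt (by positivity)

lemma jap_neg (n : ℤ) : jap (-n) = jap n := by
  simp [jap]

lemma jap_le_of_sq_le {n : ℤ} {y : ℝ} (hy : 0 ≤ y) (h : 1 + (n : ℝ) ^ 2 ≤ y ^ 2) : jap n ≤ y :=
  (Real.sqrt_le_left hy).mpr h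

lemma jap_add_le (a b : ℤ) : jap (a + b) ≤ jap a + jap b := by
  have ha : |(a : ℝ)| ≤ jap a := Real.abs_le_sqrt (by linarith)
  have hb : |(b : ℝ)| ≤ jap b := Real.abs_le_sqrt (by linarith)
  have hab : (a : ℝ) * b ≤ jap a * jap b :=
    (le_abs_self _).trans (abs_mul (a : ℝ) b ▸ mul_le_mul ha hb (abs_nonneg _) (jap_pos a).le)
  refine jap_le_of_sq_le (add_pos (jap_pos a) (jap_pos b)).le ?_
  push_cast
  nlinarith [jap_sq a, jap_sq b]

lemma jap_le_add_jap_sub (m n : ℤ) : jap m ≤ jap n + jap (m - n) := by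
  simpa using jap_add_le n (m - n)

lemma jap_le_two_mul_jap_sub {m n : ℤ} (h : 3 * |(m : ℝ)| ≤ 2 * |(n : ℝ)|) :
    jap m ≤ 2 * jap (m - n) := by
  have hmn : |(m : ℝ)| ≤ 2 * |(m : ℝ) - n| := by
    linarith [abs_sub_abs_le_abs_sub (n : ℝ) m, abs_sub_comm (n : ℝ) m]
  have hsq : (m : ℝ) ^ 2 ≤ 4 * ((m : ℝ) - n) ^ 2 := by
    nlinarith [sq_abs (m : ℝ), sq_abs ((m : ℝ) - n), abs_nonneg (m : ℝ)]
  refine jap_le_of_sq_le (by positivity [jap_pos (m - n)]) ?_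
  rw [mul_pow, jap_sq]
  push_cast
  linarith

lemma jap_natCast_le {M : ℕ} (hM : M ≠ 0) : jap M ≤ 2 * M := by
  have : (1 : ℝ) ≤ M := by exact_mod_cast Nat.one_le_iff_ne_zero.mpr hM
  exact jap_le_of_sq_le (by positivity) (by push_cast; nlinarith)

lemma jap_rpow_neg_le_inv_sq {r : ℝ} (hr : 2 ≤ r) (n : ℤ) : jap n ^ (-r) ≤ (jap n ^ 2)⁻¹ := by
  rw [← Real.rpow_natCast, ← Real.rpow_neg (jap_pos n).le]
  exact Real.rpow_le_rpow_of_exponent_le (one_le_jap n) (by push_cast; linarith)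

lemma summable_inv_jap_sq : Summable fun n : ℤ => (jap n ^ 2)⁻¹ := by
  refine Summable.of_norm_bounded_eventually (Real.summable_one_div_int_pow.mpr one_lt_two) ?_
  filter_upwards [(Set.finite_singleton (0 : ℤ)).compl_mem_cofinite] with n hn
  have hn : (0 : ℝ) < (n : ℝ) ^ 2 := by positivity [(Int.cast_ne_zero (α := ℝ)).mpr hn]
  rw [Real.norm_of_nonneg (by positivity), one_div, jap_sq]
  exact inv_anti₀ hn (by linarith)

lemma inv_sq_mul_inv_le_of_le_add {a b c : ℝ} (ha : 0 < a) (hb : 0 < b) (hc : 0 < c)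
    (h : c ≤ a + b) : (a ^ 2)⁻¹ * b⁻¹ ≤ c⁻¹ * (3 / 2 * (a ^ 2)⁻¹ + 1 / 2 * (b ^ 2)⁻¹) := by
  have amgm : a⁻¹ * b⁻¹ ≤ 1 / 2 * (a ^ 2)⁻¹ + 1 / 2 * (b ^ 2)⁻¹ := by
    nlinarith [sq_nonneg (a⁻¹ - b⁻¹), inv_pow a 2, inv_pow b 2]
  rw [le_inv_mul_iff₀ hc]
  calc c * ((a ^ 2)⁻¹ * b⁻¹) ≤ (a + b) * ((a ^ 2)⁻¹ * b⁻¹) := by gcongr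
    _ = a⁻¹ * b⁻¹ + (a ^ 2)⁻¹ := by field_simp
    _ ≤ _ := by linarith

lemma jap_conv_term_le {r : ℝ} (hr : 2 ≤ r) (m n : ℤ) :
    jap n ^ (-r) * (jap (m - n))⁻¹ ≤ (jap n ^ 2)⁻¹ * (jap (m - n))⁻¹ :=
  mul_le_mul_of_nonneg_right (jap_rpow_neg_le_inv_sq hr n) (inv_nonneg.mpr (jap_pos _).le)

lemma summable_jap_conv {r : ℝ} (hr : 2 ≤ r) (m : ℤ) :
    Summable fun n : ℤ => jap n ^ (-r) * (jap (m - n))⁻¹ := by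
  refine summable_inv_jap_sq.of_nonneg_of_le
    (fun n => mul_nonneg (Real.rpow_nonneg (jap_pos n).le _) (inv_nonneg.mpr (jap_pos _).le))
    fun n => ?_
  refine (jap_conv_term_le hr m n).trans (mul_le_of_le_one_right (by positivity) ?_)
  exact inv_le_one_of_one_le₀ (one_le_jap _)

lemma tsum_jap_conv_le {r : ℝ} (hr : 2 ≤ r) (m : ℤ) :
    ∑' n : ℤ, jap n ^ (-r) * (jap (m - n))⁻¹ ≤ 2 * (∑' n : ℤ, (jap n ^ 2)⁻¹) * (jap m)⁻¹ := by
  have hshift : Summable fun n : ℤ => (jap (m - n) ^ 2)⁻¹ :=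
    (Equiv.subLeft m).summable_iff.mpr summable_inv_jap_sq
  have hshift_eq : ∑' n : ℤ, (jap (m - n) ^ 2)⁻¹ = ∑' n : ℤ, (jap n ^ 2)⁻¹ :=
    (Equiv.subLeft m).tsum_eq fun n => (jap n ^ 2)⁻¹
  calc ∑' n : ℤ, jap n ^ (-r) * (jap (m - n))⁻¹
      ≤ ∑' n : ℤ, (jap m)⁻¹ * (3 / 2 * (jap n ^ 2)⁻¹ + 1 / 2 * (jap (m - n) ^ 2)⁻¹) := by
        refine (summable_jap_conv hr m).tsum_le_tsum (fun n => ?_)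
          (((summable_inv_jap_sq.mul_left _).add (hshift.mul_left _)).mul_left _)
        exact (jap_conv_term_le hr m n).trans (inv_sq_mul_inv_le_of_le_add (jap_pos n)
          (jap_pos _) (jap_pos m) (jap_le_add_jap_sub m n))
    _ = 2 * (∑' n : ℤ, (jap n ^ 2)⁻¹) * (jap m)⁻¹ := by
        rw [tsum_mul_left, (summable_inv_jap_sq.mul_left _).tsum_add (hshift.mul_left _),
          tsum_mul_left, tsum_mul_left, hshift_eq]
        ring

lemma Summable.ite_zero {ι : Type*} {f : ι → ℝ} (hf : Summable f) (p : ι → Prop)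
    [DecidablePred p] : Summable fun i => if p i then f i else 0 :=
  (hf.indicator {i | p i}).congr fun i => by simp only [Set.indicator_apply, Set.mem_ofPred_eq]

lemma tsum_ite_le_tsum {ι : Type*} {f : ι → ℝ} (hf : Summable f) (hf0 : ∀ i, 0 ≤ f i)
    (p : ι → Prop) [DecidablePred p] : ∑' i, (if p i then f i else 0) ≤ ∑' i, f i :=
  (hf.ite_zero p).tsum_le_tsum (fun i => by split_ifs <;> simp [hf0 i]) hf

lemma tsum_nat_tail_inv_jap_sq_le {M : ℕ} (hM : M ≠ 0) :
    ∑' k : ℕ, (if M ≤ k then (jap k ^ 2)⁻¹ else 0) ≤ 2 / M := by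
  refine Real.tsum_le_of_sum_range_le (fun k => by positivity) fun N => ?_
  obtain ⟨M, rfl⟩ := Nat.exists_eq_succ_of_ne_zero hM
  calc ∑ k ∈ range N, (if M + 1 ≤ k then (jap k ^ 2)⁻¹ else 0)
      = ∑ k ∈ Ioo M N, (jap k ^ 2)⁻¹ := by
        rw [sum_ite, sum_const_zero, add_zero]
        congr 1
        ext k
        simp only [mem_filter, mem_range, mem_Ioo]
        omega
    _ ≤ ∑ k ∈ Ioo M N, ((k : ℝ) ^ 2)⁻¹ := by
        refine sum_le_sum fun k hk => inv_anti₀ ?_ ?_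
        · have : (0 : ℝ) < k := by exact_mod_cast (Nat.zero_le M).trans_lt (mem_Ioo.mp hk).1
          positivity
        · rw [jap_sq]; push_cast; linarith
    _ ≤ 2 / ((M : ℝ) + 1) := sum_Ioo_inv_sq_le M N
    _ = 2 / ((M + 1 : ℕ) : ℝ) := by push_cast; ring

lemma tsum_tail_inv_jap_sq_le {M : ℕ} (hM : M ≠ 0) :
    ∑' n : ℤ, (if (M : ℤ) ≤ |n| then (jap n ^ 2)⁻¹ else 0) ≤ 8 * (jap M)⁻¹ := by
  set F : ℤ → ℝ := fun n => if (M : ℤ) ≤ |n| then (jap n ^ 2)⁻¹ else 0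
  have hF : Summable F := summable_inv_jap_sq.ite_zero _
  have hF0 : F 0 = 0 := by simp [F, hM]
  have hF_nat : ∀ k : ℕ, F k + F (-k) = 2 * (if M ≤ k then (jap k ^ 2)⁻¹ else 0) := by
    intro k
    simp only [F, abs_neg, jap_neg, Nat.abs_cast, Nat.cast_le]
    ring
  have hsplit := tsum_nat_add_neg hF
  rw [hF0, add_zero, tsum_congr hF_nat, tsum_mul_left] at hsplit
  calc ∑' n : ℤ, F n = 2 * ∑' k : ℕ, (if M ≤ k then (jap k ^ 2)⁻¹ else 0) := hsplit.symm
    _ ≤ 2 * (2 / M) := by gcongr; exact tsum_nat_tail_inv_jap_sq_le hM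
    _ ≤ 8 * (jap M)⁻¹ := by
        rw [← div_eq_mul_inv, le_div_iff₀ (jap_pos M)]
        have := jap_natCast_le hM
        field_simp
        nlinarith

lemma tsum_tail_jap_conv_le {r : ℝ} (hr : 2 ≤ r) {m : ℤ} {M : ℕ} (hm : 3 * |(m : ℝ)| < 2 * M) :
    ∑' n : ℤ, (if (M : ℤ) ≤ |n| then jap n ^ (-r) * (jap (m - n))⁻¹ else 0)
      ≤ 16 * (jap m)⁻¹ * (jap M)⁻¹ := by
  have hM : M ≠ 0 := by rintro rfl; norm_num at hm; linarith [abs_nonneg (m : ℝ)]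
  have hpoint : ∀ n : ℤ, (if (M : ℤ) ≤ |n| then jap n ^ (-r) * (jap (m - n))⁻¹ else 0)
      ≤ 2 * (jap m)⁻¹ * (if (M : ℤ) ≤ |n| then (jap n ^ 2)⁻¹ else 0) := by
    intro n
    split_ifs with hn
    · have hmn : 3 * |(m : ℝ)| ≤ 2 * |(n : ℝ)| := by
        have hn' : (M : ℝ) ≤ |(n : ℝ)| := by exact_mod_cast hn
        linarith
      have hinv : (jap (m - n))⁻¹ ≤ 2 * (jap m)⁻¹ := by
        rw [← div_eq_mul_inv, le_div_iff₀ (jap_pos m), inv_mul_le_iff₀ (jap_pos _)]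
        linarith [jap_le_two_mul_jap_sub hmn]
      calc jap n ^ (-r) * (jap (m - n))⁻¹ ≤ (jap n ^ 2)⁻¹ * (jap (m - n))⁻¹ :=
            jap_conv_term_le hr m n
        _ ≤ (jap n ^ 2)⁻¹ * (2 * (jap m)⁻¹) := by gcongr
        _ = 2 * (jap m)⁻¹ * (jap n ^ 2)⁻¹ := by ring
    · simp
  calc _ ≤ ∑' n : ℤ, 2 * (jap m)⁻¹ * (if (M : ℤ) ≤ |n| then (jap n ^ 2)⁻¹ else 0) :=
        ((summable_jap_conv hr m).ite_zero _).tsum_le_tsum hpoint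
          ((summable_inv_jap_sq.ite_zero _).mul_left _)
    _ ≤ 2 * (jap m)⁻¹ * (8 * (jap M)⁻¹) := by
        rw [tsum_mul_left]
        exact mul_le_mul_of_nonneg_left (tsum_tail_inv_jap_sq_le hM) (by positivity [jap_pos m])
    _ = 16 * (jap m)⁻¹ * (jap M)⁻¹ := by ring

/-- Convolution estimates, case `s ≥ 3/2`. -/
theorem statement5 (s : ℝ) (hs : 3 / 2 ≤ s) :
    ∃ c > 0, ∀ (m : ℤ) (M : ℕ),
      (∑' n : ℤ, jap n ^ (-(2 * s - 1)) * jap (m - n) ^ (-(1 : ℝ))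
          ≤ c * jap m ^ (-(1 : ℝ))) ∧
      (∑' n : ℤ, (if (M : ℤ) ≤ |n| then
            jap n ^ (-(2 * s - 1)) * jap (m - n) ^ (-(1 : ℝ)) else 0)
          ≤ c * jap m ^ (-(1 : ℝ)) *
            ((if 2 * (M : ℝ) / 3 ≤ |(m : ℝ)| then (1 : ℝ) else 0)
              + jap (M : ℤ) ^ (-(1 : ℝ)))) := by
  have hr : 2 ≤ 2 * s - 1 := by linarith
  set K := ∑' n : ℤ, (jap n ^ 2)⁻¹
  have hK : 0 ≤ K := tsum_nonneg fun n => by positivity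
  refine ⟨2 * K + 16, by positivity, fun m M => ?_⟩
  simp only [Real.rpow_neg_one]
  have hm := inv_pos.mpr (jap_pos m)
  have hM := inv_pos.mpr (jap_pos M)
  have hfull : ∑' n : ℤ, jap n ^ (-(2 * s - 1)) * (jap (m - n))⁻¹ ≤ (2 * K + 16) * (jap m)⁻¹ :=
    (tsum_jap_conv_le hr m).trans (by gcongr; linarith)
  refine ⟨hfull, ?_⟩
  split_ifs with hmM
  · calc _ ≤ ∑' n : ℤ, jap n ^ (-(2 * s - 1)) * (jap (m - n))⁻¹ :=
          tsum_ite_le_tsum (summable_jap_conv hr m)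
            (fun n => mul_nonneg (Real.rpow_nonneg (jap_pos n).le _) (inv_nonneg.mpr (jap_pos _).le)) _
      _ ≤ (2 * K + 16) * (jap m)⁻¹ := hfull
      _ ≤ (2 * K + 16) * (jap m)⁻¹ * (1 + (jap M)⁻¹) :=
          le_mul_of_one_le_right (by positivity) (by linarith)
  · calc _ ≤ 16 * (jap m)⁻¹ * (jap M)⁻¹ := tsum_tail_jap_conv_le hr (by linarith)
      _ ≤ (2 * K + 16) * (jap m)⁻¹ * (0 + (jap M)⁻¹) := by
          rw [zero_add]; gcongr; linarith
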